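/- Let A be a left brace. Then for all a,b,c ∈ A: (a∘b)*c = (a∘b∘a')*λ_a(c) + a*c, where x' denotes the inverse of x in the group (A,∘), λ_a(c) = -a + a∘c, and x*y = λ_x(y) - y. -/
import Mathlib


/-- A left brace structure on an additive abelian group: a group operation
`circ` (with inverse `inv`, whose identity is 0) satisfying the left brace
compatibility a∘(b+c) = a∘b - a + a∘c. -/
structure LeftBrace (A : Type*) [AddCommGroup A] where
  circ : A → A → A
  inv : A → A
  circ_assoc : ∀ a b c, circ (circ a b) c = circ a (circ b c)
  circ_zero : ∀ a, circ a 0 = a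
  zero_circ : ∀ a, circ 0 a = a
  circ_inv : ∀ a, circ a (inv a) = 0
  inv_circ : ∀ a, circ (inv a) a = 0
  compat : ∀ a b c, circ a (b + c) = circ a b - a + circ a c

namespace LeftBrace

variable {A : Type*} [AddCommGroup A] (B : LeftBrace A)

/-- λ_a(b) = -a + a∘b. -/
def lam (a b : A) : A := -a + B.circ a b

/-- a*b = λ_a(b) - b. -/
def star (a b : A) : A := B.lam a b - b

/-- μ_b(a) = λ_a(b)ʹ ∘ a ∘ b. -/
def mu (b a : A) : A := B.circ (B.inv (B.lam a b)) (B.circ a b)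

/-- A left brace is two-sided if (a+b)∘c = a∘c - c + b∘c. -/
def IsTwoSided : Prop := ∀ a b c : A, B.circ (a + b) c = B.circ a c - c + B.circ b c

/-- The Yang–Baxter map r_A(a,b) = (λ_a(b), μ_b(a)) associated to a left brace. -/
def rmap : A × A → A × A := fun p => (B.lam p.1 p.2, B.mu p.2 p.1)

/-- `r × id` acting on triples. -/
def r1map {X : Type*} (r : X × X → X × X) : X × X × X → X × X × X :=
  fun p => ((r (p.1, p.2.1)).1, (r (p.1, p.2.1)).2, p.2.2)

/-- `id × r` acting on triples. -/
def r2map {X : Type*} (r : X × X → X × X) : X × X × X → X × X × X :=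
  fun p => (p.1, r p.2)

/-- `id × k` on pairs. -/
def k2map {X : Type*} (k : X → X) : X × X → X × X := fun p => (p.1, k p.2)

/-- `k × id` on pairs. -/
def k1map {X : Type*} (k : X → X) : X × X → X × X := fun p => (k p.1, p.2)

end LeftBrace

open LeftBrace

private lemma circ_neg {A : Type*} [AddCommGroup A] (B : LeftBrace A) (x y : A) :
    B.circ x (-y) = x + x - B.circ x y := by
  have h := B.compat x y (-y)
  rw [add_neg_cancel, B.circ_zero] at h
  calc B.circ x (-y) = (B.circ x y - x + B.circ x (-y)) + x - B.circ x y := by abel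
    _ = x + x - B.circ x y := by rw [← h]

private lemma lam_circ {A : Type*} [AddCommGroup A] (B : LeftBrace A) (a b c : A) :
    B.lam (B.circ a b) c = B.lam a (B.lam b c) := by
  unfold LeftBrace.lam
  rw [B.compat a (-b) (B.circ b c), circ_neg, B.circ_assoc]
  abel

private lemma lam_zero {A : Type*} [AddCommGroup A] (B : LeftBrace A) (c : A) :
    B.lam 0 c = c := by
  simp [LeftBrace.lam, B.zero_circ]

/-- Equation (2.4): in any left brace, (a∘b)*c = (a∘b∘aʹ)*λ_a(c) + a*c. -/
theorem statement5 {A : Type*} [AddCommGroup A] (B : LeftBrace A) :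
    ∀ a b c : A,
      B.star (B.circ a b) c =
        B.star (B.circ (B.circ a b) (B.inv a)) (B.lam a c) + B.star a c := by
  intro a b c
  have key : B.lam (B.circ (B.circ a b) (B.inv a)) (B.lam a c) = B.lam (B.circ a b) c := by
    rw [lam_circ, ← lam_circ B (B.inv a) a c, B.inv_circ, lam_zero]
  unfold LeftBrace.star
  rw [key]
  abel
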